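/- arXiv:2505.13416 — 4 statements merged into one kernel-verified Lean document; each statement's English description precedes it below -/
import Mathlib

section
/- Let f: S → ℝ be layer-wise (L⁰, L¹)-smooth. Then for all X = [X_1,…,X_p] ∈ S and Y = [Y_1,…,Y_p] ∈ S, |f(Y) − f(X) − ⟨∇f(X), Y − X⟩| ≤ Σ_{i=1}^p ((L⁰_i + L¹_i ‖∇_i f(X)‖_{(i)⋆})/2) ‖Y_i − X_i‖_{(i)}². -/
noncomputable section
open Finset

/-- Trace inner product `⟨A,B⟩ = tr(AᵀB)` on `m×n` real matrices (viewed as functions). -/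
def tip {m n : ℕ} (A B : Fin m → Fin n → ℝ) : ℝ := ∑ a, ∑ b, A a b * B a b

/-- An arbitrary norm on the space of `m×n` real matrices. -/
structure MatNorm (m n : ℕ) where
  N : (Fin m → Fin n → ℝ) → ℝ
  pos : ∀ A, A ≠ 0 → 0 < N A
  zero : N 0 = 0
  smul : ∀ (c : ℝ) (A : Fin m → Fin n → ℝ), N (c • A) = |c| * N A
  triangle : ∀ A B, N (A + B) ≤ N A + N B

/-- The dual norm `‖A‖⋆ = sup_{‖Z‖ ≤ 1} ⟨A, Z⟩`. -/
def MatNorm.dual {m n : ℕ} (nn : MatNorm m n) (A : Fin m → Fin n → ℝ) : ℝ :=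
  sSup {r : ℝ | ∃ Z, nn.N Z ≤ 1 ∧ r = tip A Z}

/-
Along the segment `t ↦ X + t • (Y - X)` the directional derivative of `f` moves away from its
value at `X` by at most `t * Σᵢ (L⁰ᵢ + L¹ᵢ ‖∇ᵢ f(X)‖⋆) ‖Yᵢ - Xᵢ‖²`: pair each layer of the gradient
difference with `Yᵢ - Xᵢ` through the dual norm and apply layer-wise smoothness based at `X`.
Integrating this linear bound over `[0, 1]` produces the factor `1/2`. The dual norm is a genuine
supremum because every norm on a finite-dimensional space dominates a multiple of the sup norm.
-/

open Set

section Matrices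

variable {m n : ℕ}

lemma tip_sub_left (A B C : Fin m → Fin n → ℝ) : tip (A - B) C = tip A C - tip B C := by
  simp only [tip, Pi.sub_apply, sub_mul, sum_sub_distrib]

lemma tip_neg_left (A B : Fin m → Fin n → ℝ) : tip (-A) B = -tip A B := by
  simp only [tip, Pi.neg_apply, neg_mul, sum_neg_distrib]

lemma tip_neg_right (A B : Fin m → Fin n → ℝ) : tip A (-B) = -tip A B := by
  simp only [tip, Pi.neg_apply, mul_neg, sum_neg_distrib]

lemma tip_smul_right (A B : Fin m → Fin n → ℝ) (c : ℝ) : tip A (c • B) = c * tip A B := by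
  simp only [tip, Pi.smul_apply, smul_eq_mul, mul_sum]
  exact sum_congr rfl fun _ _ => sum_congr rfl fun _ _ => by ring

lemma continuous_tip_right (A : Fin m → Fin n → ℝ) : Continuous (tip A) := by
  unfold tip; fun_prop

namespace MatNorm

variable (nn : MatNorm m n)

lemma N_neg (A : Fin m → Fin n → ℝ) : nn.N (-A) = nn.N A := by
  simpa using nn.smul (-1) A

lemma N_nonneg (A : Fin m → Fin n → ℝ) : 0 ≤ nn.N A := by
  have h := nn.triangle A (-A)
  rw [add_neg_cancel, nn.zero, N_neg] at h
  linarith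

lemma convexOn_N : ConvexOn ℝ univ nn.N := by
  refine ⟨convex_univ, fun A _ B _ a b ha hb _ => ?_⟩
  calc nn.N (a • A + b • B) ≤ nn.N (a • A) + nn.N (b • B) := nn.triangle _ _
    _ = a • nn.N A + b • nn.N B := by
      rw [nn.smul, nn.smul, abs_of_nonneg ha, abs_of_nonneg hb, smul_eq_mul, smul_eq_mul]

lemma continuous_N : Continuous nn.N :=
  nn.convexOn_N.locallyLipschitz.continuous

lemma exists_pos_mul_norm_le : ∃ c > 0, ∀ Z, c * ‖Z‖ ≤ nn.N Z := by
  obtain ⟨c, hc, hcN⟩ := (isCompact_sphere (0 : Fin m → Fin n → ℝ) 1).exists_forall_le'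
    nn.continuous_N.continuousOn fun Z hZ => nn.pos Z (ne_zero_of_mem_unit_sphere ⟨Z, hZ⟩)
  refine ⟨c, hc, fun Z => ?_⟩
  rcases eq_or_ne Z 0 with rfl | hZ
  · simp [nn.zero]
  have hZpos : 0 < ‖Z‖ := norm_pos_iff.2 hZ
  have hunit : ‖Z‖⁻¹ • Z ∈ Metric.sphere (0 : Fin m → Fin n → ℝ) 1 := by
    rw [mem_sphere_zero_iff_norm, norm_smul, norm_inv, norm_norm, inv_mul_cancel₀ hZpos.ne']
  have hcZ := hcN _ hunit
  rwa [nn.smul, abs_inv, abs_norm, le_inv_mul_iff₀ hZpos, mul_comm] at hcZ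

lemma bddAbove_tip_unitBall (A : Fin m → Fin n → ℝ) :
    BddAbove {r : ℝ | ∃ Z, nn.N Z ≤ 1 ∧ r = tip A Z} := by
  obtain ⟨c, hc, hcN⟩ := nn.exists_pos_mul_norm_le
  have hsub : {r : ℝ | ∃ Z, nn.N Z ≤ 1 ∧ r = tip A Z} ⊆
      tip A '' Metric.closedBall 0 c⁻¹ := by
    rintro r ⟨Z, hZ, rfl⟩
    refine ⟨Z, ?_, rfl⟩
    rw [mem_closedBall_zero_iff, ← mul_le_mul_iff_of_pos_left hc, mul_inv_cancel₀ hc.ne']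
    exact (hcN Z).trans hZ
  exact ((isCompact_closedBall _ _).bddAbove_image
    (continuous_tip_right A).continuousOn).mono hsub

lemma tip_le_dual_mul (A B : Fin m → Fin n → ℝ) : tip A B ≤ nn.dual A * nn.N B := by
  rcases eq_or_ne B 0 with rfl | hB
  · simp [tip, nn.zero]
  have hpos := nn.pos B hB
  have hunit : tip A ((nn.N B)⁻¹ • B) ≤ nn.dual A := by
    refine le_csSup (nn.bddAbove_tip_unitBall A) ⟨_, ?_, rfl⟩
    rw [nn.smul, abs_inv, abs_of_pos hpos, inv_mul_cancel₀ hpos.ne']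
  rwa [tip_smul_right, inv_mul_le_iff₀ hpos, mul_comm] at hunit

lemma abs_tip_le_dual_mul (A B : Fin m → Fin n → ℝ) : |tip A B| ≤ nn.dual A * nn.N B := by
  have h := nn.tip_le_dual_mul A (-B)
  rw [tip_neg_right, N_neg] at h
  exact abs_le.2 ⟨by linarith, nn.tip_le_dual_mul A B⟩

end MatNorm

end Matrices

theorem abs_sub_sub_fderiv_le_of_fderiv_sub_le {E : Type*} [NormedAddCommGroup E]
    [NormedSpace ℝ E] {f : E → ℝ} (hf : Differentiable ℝ f) (X D : E) {C : ℝ}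
    (h : ∀ t ∈ Ico (0 : ℝ) 1, |fderiv ℝ f (X + t • D) D - fderiv ℝ f X D| ≤ C * t) :
    |f (X + D) - f X - fderiv ℝ f X D| ≤ C / 2 := by
  have hderiv : ∀ t : ℝ, HasDerivAt (fun s : ℝ => f (X + s • D) - f X - s * fderiv ℝ f X D)
      (fderiv ℝ f (X + t • D) D - fderiv ℝ f X D) t := by
    intro t
    have hγ : HasDerivAt (fun s : ℝ => X + s • D) D t := by
      simpa using ((hasDerivAt_id t).smul_const D).const_add X
    have hφ := ((hf _).hasFDerivAt.comp_hasDerivAt t hγ).sub_const (f X)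
    exact hφ.sub (hasDerivAt_mul_const _)
  have hB : ∀ t : ℝ, HasDerivAt (fun s : ℝ => C / 2 * s ^ 2) (C * t) t := fun t =>
    ((hasDerivAt_pow 2 t).const_mul (C / 2)).congr_deriv (by push_cast; ring)
  have := image_norm_le_of_norm_deriv_right_le_deriv_boundary
    (fun t _ => (hderiv t).continuousAt.continuousWithinAt)
    (fun t _ => (hderiv t).hasDerivWithinAt) (by simp) hB h (right_mem_Icc.2 zero_le_one)
  simpa using this

def LayerwiseSmooth {p : ℕ} {m n : Fin p → ℕ} (nn : ∀ i, MatNorm (m i) (n i))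
    (g : (∀ i, Fin (m i) → Fin (n i) → ℝ) → ∀ i, Fin (m i) → Fin (n i) → ℝ)
    (L0 L1 : Fin p → ℝ) : Prop :=
  ∀ i X Y, (nn i).dual (g X i - g Y i)
    ≤ (L0 i + L1 i * (nn i).dual (g X i)) * (nn i).N (X i - Y i)

lemma LayerwiseSmooth.abs_tip_sub_le {p : ℕ} {m n : Fin p → ℕ} {nn : ∀ i, MatNorm (m i) (n i)}
    {g : (∀ i, Fin (m i) → Fin (n i) → ℝ) → ∀ i, Fin (m i) → Fin (n i) → ℝ} {L0 L1 : Fin p → ℝ}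
    (hg : LayerwiseSmooth nn g L0 L1) (X D : ∀ i, Fin (m i) → Fin (n i) → ℝ) (i : Fin p)
    {t : ℝ} (ht : 0 ≤ t) :
    |tip (g (X + t • D) i - g X i) (D i)|
      ≤ (L0 i + L1 i * (nn i).dual (g X i)) * (nn i).N (D i) ^ 2 * t := by
  have hdist : (nn i).N (X i - (X + t • D) i) = t * (nn i).N (D i) := by
    rw [Pi.add_apply, sub_add_cancel_left, Pi.smul_apply, MatNorm.N_neg, (nn i).smul,
      abs_of_nonneg ht]
  calc |tip (g (X + t • D) i - g X i) (D i)|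
      = |tip (g X i - g (X + t • D) i) (D i)| := by rw [← abs_neg, ← tip_neg_left, neg_sub]
    _ ≤ (nn i).dual (g X i - g (X + t • D) i) * (nn i).N (D i) := (nn i).abs_tip_le_dual_mul _ _
    _ ≤ (L0 i + L1 i * (nn i).dual (g X i)) * (t * (nn i).N (D i)) * (nn i).N (D i) := by
        rw [← hdist]
        exact mul_le_mul_of_nonneg_right (hg i _ _) ((nn i).N_nonneg _)
    _ = (L0 i + L1 i * (nn i).dual (g X i)) * (nn i).N (D i) ^ 2 * t := by ring

theorem stmt_0_general {p : ℕ} {m n : Fin p → ℕ}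
    (nn : ∀ i, MatNorm (m i) (n i))
    (f : (∀ i, Fin (m i) → Fin (n i) → ℝ) → ℝ)
    (g : (∀ i, Fin (m i) → Fin (n i) → ℝ) → ∀ i, Fin (m i) → Fin (n i) → ℝ)
    (hdiff : ContDiff ℝ 1 f)
    (hgrad : ∀ X H, fderiv ℝ f X H = ∑ i, tip (g X i) (H i))
    (L0 L1 : Fin p → ℝ)
    (hsmooth : ∀ i X Y, (nn i).dual (g X i - g Y i)
      ≤ (L0 i + L1 i * (nn i).dual (g X i)) * (nn i).N (X i - Y i)) :
    ∀ X Y, |f Y - f X - ∑ i, tip (g X i) (Y i - X i)|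
      ≤ ∑ i, (L0 i + L1 i * (nn i).dual (g X i)) / 2 * ((nn i).N (Y i - X i)) ^ 2 := by
  intro X Y
  have htaylor := abs_sub_sub_fderiv_le_of_fderiv_sub_le (hdiff.differentiable one_ne_zero)
    X (Y - X) (C := ∑ i, (L0 i + L1 i * (nn i).dual (g X i)) * (nn i).N ((Y - X) i) ^ 2)
    fun t ht => by
      simp only [hgrad, ← sum_sub_distrib, ← tip_sub_left, sum_mul]
      exact (abs_sum_le_sum_abs _ _).trans
        (sum_le_sum fun i _ => LayerwiseSmooth.abs_tip_sub_le hsmooth X (Y - X) i ht.1)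
  rw [add_sub_cancel, hgrad, sum_div] at htaylor
  simpa only [mul_div_right_comm, Pi.sub_apply] using htaylor

/-- If `f` is layer-wise `(L⁰, L¹)`-smooth, then for all `X, Y`,
`|f(Y) − f(X) − ⟨∇f(X), Y − X⟩| ≤ Σᵢ ((L⁰ᵢ + L¹ᵢ‖∇ᵢf(X)‖⋆)/2)‖Yᵢ − Xᵢ‖²`. -/
theorem stmt_0 {p : ℕ} {m n : Fin p → ℕ}
    (nn : ∀ i, MatNorm (m i) (n i))
    (f : (∀ i, Fin (m i) → Fin (n i) → ℝ) → ℝ)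
    (g : (∀ i, Fin (m i) → Fin (n i) → ℝ) → ∀ i, Fin (m i) → Fin (n i) → ℝ)
    (hdiff : ContDiff ℝ 1 f)
    (hgrad : ∀ X H, fderiv ℝ f X H = ∑ i, tip (g X i) (H i))
    (L0 L1 : Fin p → ℝ) (hL0 : ∀ i, 0 ≤ L0 i) (hL1 : ∀ i, 0 ≤ L1 i)
    (hsmooth : ∀ i X Y, (nn i).dual (g X i - g Y i)
      ≤ (L0 i + L1 i * (nn i).dual (g X i)) * (nn i).N (X i - Y i)) :
    ∀ X Y, |f Y - f X - ∑ i, tip (g X i) (Y i - X i)|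
      ≤ ∑ i, (L0 i + L1 i * (nn i).dual (g X i)) / 2 * ((nn i).N (Y i - X i)) ^ 2 :=
  stmt_0_general nn f g hdiff hgrad L0 L1 hsmooth
end
end

section
/- Let q ∈ (0,1), p ≥ 0 with p ≥ q, and let a, b be natural numbers with 2 ≤ a ≤ b. Then Σ_{k=a−1}^{b−1} (1+k)^{−p} ∏_{τ=a−1}^{k} (1 − (τ+1)^{−q}) ≤ (a−1)^{q−p} · exp((a^{1−q} − (a−1)^{1−q})/(1−q)). -/
/-!
Since `1 + k ≥ a - 1` and `p ≥ q`, each weight `(1 + k)^(-p)` is at most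
`(a - 1)^(q - p) (1 + k)^(-q)`. With `x τ = (τ + 1)^(-q) ∈ [0, 1]`, what remains is
`∑ x k ∏_{τ ≤ k} (1 - x τ)`, a telescoping sum bounded by `1`; the exponential factor is
at least `1`.
-/

open Finset

section TelescopingProduct

variable {R : Type*} [CommRing R] [LinearOrder R] [IsStrictOrderedRing R]

/-- With `P n = ∏_{τ ∈ [m, n]} (1 - x τ)`, each term is
`x k * P k ≤ x k * P (k - 1) = P (k - 1) - P k`. -/
theorem sum_Icc_mul_prod_one_sub_le {x : ℕ → R} (hx0 : ∀ i, 0 ≤ x i)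
    (hx1 : ∀ i, x i ≤ 1) {m n : ℕ} (hmn : m ≤ n) :
    ∑ k ∈ Icc m n, x k * ∏ τ ∈ Icc m k, (1 - x τ) ≤
      1 - ∏ τ ∈ Icc m n, (1 - x τ) := by
  induction n, hmn using Nat.le_induction with
  | base =>
    simp only [Icc_self, sum_singleton, prod_singleton]
    nlinarith [hx0 m, hx1 m]
  | succ n hmn ih =>
    rw [sum_Icc_succ_top (by omega), prod_Icc_succ_top (by omega)]
    have hP : 0 ≤ ∏ τ ∈ Icc m n, (1 - x τ) :=
      prod_nonneg fun τ _ ↦ sub_nonneg.mpr (hx1 τ)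
    nlinarith [mul_nonneg (hx0 (n + 1)) hP, hx0 (n + 1), hx1 (n + 1)]

theorem sum_Icc_mul_prod_one_sub_le_one {x : ℕ → R} (hx0 : ∀ i, 0 ≤ x i)
    (hx1 : ∀ i, x i ≤ 1) {m n : ℕ} (hmn : m ≤ n) :
    ∑ k ∈ Icc m n, x k * ∏ τ ∈ Icc m k, (1 - x τ) ≤ 1 := by
  have hP : 0 ≤ ∏ τ ∈ Icc m n, (1 - x τ) := prod_nonneg fun τ _ ↦ sub_nonneg.mpr (hx1 τ)
  linarith [sum_Icc_mul_prod_one_sub_le hx0 hx1 hmn]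

end TelescopingProduct

namespace Real

theorem rpow_neg_le_rpow_sub_mul_rpow_neg {c t p q : ℝ} (hc : 0 < c) (hct : c ≤ t)
    (hqp : q ≤ p) : t ^ (-p) ≤ c ^ (q - p) * t ^ (-q) := by
  have ht : 0 < t := hc.trans_le hct
  calc t ^ (-p) = t ^ (q - p) * t ^ (-q) := by rw [← rpow_add ht]; ring_nf
    _ ≤ c ^ (q - p) * t ^ (-q) :=
      mul_le_mul_of_nonneg_right (rpow_le_rpow_of_nonpos hc hct (by linarith)) (by positivity)

theorem one_le_exp_rpow_sub_rpow_div {a r : ℝ} (ha : 1 ≤ a) (hr : 0 ≤ r) :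
    1 ≤ exp ((a ^ r - (a - 1) ^ r) / r) := by
  rw [one_le_exp_iff]
  have : (a - 1) ^ r ≤ a ^ r := rpow_le_rpow (by linarith) (by linarith) hr
  exact div_nonneg (by linarith) hr

end Real

theorem stmt_3_general (q p : ℝ) (hq0 : 0 < q) (hq1 : q < 1) (hpq : q ≤ p)
    (a b : ℕ) (ha : 2 ≤ a) (hab : a ≤ b) :
    ∑ k ∈ Finset.Icc (a - 1) (b - 1),
        ((1 : ℝ) + (k : ℝ)) ^ (-p) *
          ∏ τ ∈ Finset.Icc (a - 1) k, (1 - ((τ : ℝ) + 1) ^ (-q))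
      ≤ ((a : ℝ) - 1) ^ (q - p) *
        Real.exp (((a : ℝ) ^ (1 - q) - ((a : ℝ) - 1) ^ (1 - q)) / (1 - q)) := by
  have hx0 (τ : ℕ) : 0 ≤ ((τ : ℝ) + 1) ^ (-q) := by positivity
  have hx1 (τ : ℕ) : ((τ : ℝ) + 1) ^ (-q) ≤ 1 :=
    Real.rpow_le_one_of_one_le_of_nonpos (by simp) (by linarith)
  have ha' : (2 : ℝ) ≤ a := by exact_mod_cast ha
  calc _ ≤ ∑ k ∈ Icc (a - 1) (b - 1), ((a : ℝ) - 1) ^ (q - p) *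
          (((k : ℝ) + 1) ^ (-q) * ∏ τ ∈ Icc (a - 1) k, (1 - ((τ : ℝ) + 1) ^ (-q))) := by
        refine sum_le_sum fun k hk ↦ ?_
        have hak : (a : ℝ) ≤ k + 1 := by exact_mod_cast (by grind : a ≤ k + 1)
        rw [← mul_assoc, add_comm (k : ℝ)]
        exact mul_le_mul_of_nonneg_right
          (Real.rpow_neg_le_rpow_sub_mul_rpow_neg (by linarith) (by linarith) hpq)
          (prod_nonneg fun τ _ ↦ sub_nonneg.mpr (hx1 τ))
    _ = ((a : ℝ) - 1) ^ (q - p) * ∑ k ∈ Icc (a - 1) (b - 1),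
          ((k : ℝ) + 1) ^ (-q) * ∏ τ ∈ Icc (a - 1) k, (1 - ((τ : ℝ) + 1) ^ (-q)) := by
        rw [mul_sum]
    _ ≤ ((a : ℝ) - 1) ^ (q - p) := by
        refine mul_le_of_le_one_right (Real.rpow_nonneg (by linarith) _) ?_
        exact sum_Icc_mul_prod_one_sub_le_one (x := fun τ : ℕ ↦ ((τ : ℝ) + 1) ^ (-q))
          hx0 hx1 (by omega)
    _ ≤ _ := le_mul_of_one_le_right (Real.rpow_nonneg (by linarith) _)
          (Real.one_le_exp_rpow_sub_rpow_div (by linarith) (by linarith))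

/-- Technical Lemma (Hübler et al.): for `q ∈ (0,1)`, `p ≥ 0`, `p ≥ q`, and naturals
`2 ≤ a ≤ b`,
`Σ_{k=a−1}^{b−1} (1+k)^{−p} ∏_{τ=a−1}^{k} (1 − (τ+1)^{−q})
  ≤ (a−1)^{q−p} exp((a^{1−q} − (a−1)^{1−q})/(1−q))`. -/
theorem stmt_3 (q p : ℝ) (hq0 : 0 < q) (hq1 : q < 1) (hp0 : 0 ≤ p) (hpq : q ≤ p)
    (a b : ℕ) (ha : 2 ≤ a) (hab : a ≤ b) :
    ∑ k ∈ Finset.Icc (a - 1) (b - 1),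
        ((1 : ℝ) + (k : ℝ)) ^ (-p) *
          ∏ τ ∈ Finset.Icc (a - 1) k, (1 - ((τ : ℝ) + 1) ^ (-q))
      ≤ ((a : ℝ) - 1) ^ (q - p) *
        Real.exp (((a : ℝ) ^ (1 - q) - ((a : ℝ) - 1) ^ (1 - q)) / (1 - q)) :=
  stmt_3_general q p hq0 hq1 hpq a b ha hab
end

section
/- Let t > 0 and for integers k ≥ 0 set β^k = 1 − (k+1)^{−1/2} and t^k = t (k+1)^{−3/4}. Then for every integer K ≥ 1, Σ_{k=0}^{K−1} t^k · sqrt( Σ_{τ=0}^{k} (1−β^τ)² ∏_{κ=τ+1}^{k} (β^κ)² ) ≤ t (7/2 + sqrt(2e²) · log K). -/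
/-!
Write `Sₖ = Σ_{τ ≤ k} (1 - β^τ)² ∏_{τ < κ ≤ k} (β^κ)²`. Then `S_{k+1} = (β^{k+1})² Sₖ + (1 - β^{k+1})²`,
and by induction `Sₖ ≤ (k+1)^{-1/2}`: with `s = √(k+1)` and `v = √(k+2) ≤ s + 1` the induction step
reduces to `(v - 1)² ≤ s (v - 1)`. Hence the `k`-th summand is at most
`t (k+1)^{-3/4} (k+1)^{-1/4} = t / (k+1)`, and the sum is at most `t H_K ≤ t (1 + log K)`.
-/

open Finset

theorem Finset.sum_range_succ_mul_prod_Icc {R : Type*} [CommSemiring R] (a b : ℕ → R) (k : ℕ) :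
    ∑ τ ∈ range (k + 2), a τ * ∏ κ ∈ Icc (τ + 1) (k + 1), b κ
      = b (k + 1) * ∑ τ ∈ range (k + 1), a τ * ∏ κ ∈ Icc (τ + 1) k, b κ + a (k + 1) := by
  rw [sum_range_succ, Icc_eq_empty (by omega), prod_empty, mul_one, mul_sum]
  congr 1
  refine sum_congr rfl fun τ hτ => ?_
  rw [prod_Icc_succ_top (by simp at hτ; omega)]
  ring

lemma one_sub_inv_sq_mul_inv_add_inv_sq_le {s v : ℝ} (hs : 0 < s) (hv : 1 ≤ v) (hvs : v ≤ s + 1) :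
    (1 - v⁻¹) ^ 2 * s⁻¹ + (v⁻¹) ^ 2 ≤ v⁻¹ := by
  have hv0 : 0 < v := by linarith
  have key : v⁻¹ - ((1 - v⁻¹) ^ 2 * s⁻¹ + (v⁻¹) ^ 2) = (v - 1) * (s - (v - 1)) / (v ^ 2 * s) := by
    field_simp
    ring
  have : 0 ≤ (v - 1) * (s - (v - 1)) / (v ^ 2 * s) := by
    apply div_nonneg <;> nlinarith
  linarith

lemma rpow_neg_half_eq_inv_sqrt {x : ℝ} (hx : 0 ≤ x) : x ^ (-(1 / 2 : ℝ)) = (√x)⁻¹ := by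
  rw [Real.rpow_neg hx, Real.sqrt_eq_rpow]

lemma sum_sq_one_sub_mul_prod_sq_le (β : ℕ → ℝ)
    (hβ : ∀ k, β k = 1 - ((k : ℝ) + 1) ^ (-(1 / 2 : ℝ))) (k : ℕ) :
    ∑ τ ∈ range (k + 1), (1 - β τ) ^ 2 * ∏ κ ∈ Icc (τ + 1) k, (β κ) ^ 2
      ≤ ((k : ℝ) + 1) ^ (-(1 / 2 : ℝ)) := by
  induction k with
  | zero => simp [hβ 0]
  | succ k ih =>
    have hk : (0 : ℝ) ≤ k := k.cast_nonneg
    have hcast : ((k + 1 : ℕ) : ℝ) + 1 = (k + 1) + 1 := by push_cast; ring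
    rw [sum_range_succ_mul_prod_Icc, hβ, hcast, sub_sub_cancel,
      rpow_neg_half_eq_inv_sqrt (by linarith)]
    rw [rpow_neg_half_eq_inv_sqrt (by linarith)] at ih
    have hv : 1 ≤ √((k : ℝ) + 1 + 1) := Real.one_le_sqrt.mpr (by linarith)
    have hs : 1 ≤ √((k : ℝ) + 1) := Real.one_le_sqrt.mpr (by linarith)
    have hvs : √((k : ℝ) + 1 + 1) ≤ √((k : ℝ) + 1) + 1 := by
      rw [Real.sqrt_le_left (by positivity), add_sq, Real.sq_sqrt (by linarith)]
      linarith
    calc (1 - (√((k : ℝ) + 1 + 1))⁻¹) ^ 2 * ∑ τ ∈ range (k + 1),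
            (1 - β τ) ^ 2 * ∏ κ ∈ Icc (τ + 1) k, (β κ) ^ 2 + (√((k : ℝ) + 1 + 1))⁻¹ ^ 2
        ≤ (1 - (√((k : ℝ) + 1 + 1))⁻¹) ^ 2 * (√((k : ℝ) + 1))⁻¹ + (√((k : ℝ) + 1 + 1))⁻¹ ^ 2 := by
          gcongr
      _ ≤ (√((k : ℝ) + 1 + 1))⁻¹ := one_sub_inv_sq_mul_inv_add_inv_sq_le (by linarith) hv hvs

lemma rpow_neg_three_quarters_mul_sqrt_rpow_neg_half {x : ℝ} (hx : 0 < x) :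
    x ^ (-(3 / 4 : ℝ)) * √(x ^ (-(1 / 2 : ℝ))) = x⁻¹ := by
  rw [Real.sqrt_eq_rpow, ← Real.rpow_mul hx.le, ← Real.rpow_add hx, ← Real.rpow_neg_one]
  norm_num

lemma sum_range_inv_succ_le_one_add_log (K : ℕ) :
    ∑ k ∈ range K, ((k : ℝ) + 1)⁻¹ ≤ 1 + Real.log K := by
  convert harmonic_le_one_add_log K
  simp [harmonic]

theorem stmt_4_general (t : ℝ) (ht : 0 < t)
    (β : ℕ → ℝ) (hβ : ∀ k, β k = 1 - ((k : ℝ) + 1) ^ (-(1 / 2 : ℝ)))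
    (ts : ℕ → ℝ) (hts : ∀ k, ts k = t * ((k : ℝ) + 1) ^ (-(3 / 4 : ℝ)))
    (K : ℕ) :
    ∑ k ∈ Finset.range K,
        ts k * Real.sqrt (∑ τ ∈ Finset.range (k + 1),
          (1 - β τ) ^ 2 * ∏ κ ∈ Finset.Icc (τ + 1) k, (β κ) ^ 2)
      ≤ t * (7 / 2 + Real.sqrt (2 * Real.exp 1 ^ 2) * Real.log K) := by
  have hterm (k : ℕ) : ts k * √(∑ τ ∈ range (k + 1),
      (1 - β τ) ^ 2 * ∏ κ ∈ Icc (τ + 1) k, (β κ) ^ 2) ≤ t * ((k : ℝ) + 1)⁻¹ := by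
    rw [hts, ← rpow_neg_three_quarters_mul_sqrt_rpow_neg_half (by positivity), mul_assoc]
    gcongr
    exact sum_sq_one_sub_mul_prod_sq_le β hβ k
  have hlog : 0 ≤ Real.log K := Real.log_natCast_nonneg K
  have hsqrt : 1 ≤ √(2 * Real.exp 1 ^ 2) :=
    Real.one_le_sqrt.mpr (by nlinarith [Real.add_one_le_exp 1])
  calc _ ≤ ∑ k ∈ range K, t * ((k : ℝ) + 1)⁻¹ := sum_le_sum fun k _ => hterm k
    _ ≤ t * (1 + Real.log K) := by
      rw [← mul_sum]
      exact mul_le_mul_of_nonneg_left (sum_range_inv_succ_le_one_add_log K) ht.le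
    _ ≤ t * (7 / 2 + √(2 * Real.exp 1 ^ 2) * Real.log K) := by
      gcongr
      · norm_num
      · exact le_mul_of_one_le_left hlog hsqrt

/-- Technical Lemma (Hübler et al., part (i)): with `βᵏ = 1 − (k+1)^{−1/2}` and
`tᵏ = t(k+1)^{−3/4}` for `t > 0`, for every `K ≥ 1`,
`Σ_{k=0}^{K−1} tᵏ √(Σ_{τ=0}^{k} (1−β^τ)² ∏_{κ=τ+1}^{k} (β^κ)²) ≤ t(7/2 + √(2e²) log K)`. -/
theorem stmt_4 (t : ℝ) (ht : 0 < t)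
    (β : ℕ → ℝ) (hβ : ∀ k, β k = 1 - ((k : ℝ) + 1) ^ (-(1 / 2 : ℝ)))
    (ts : ℕ → ℝ) (hts : ∀ k, ts k = t * ((k : ℝ) + 1) ^ (-(3 / 4 : ℝ)))
    (K : ℕ) (hK : 1 ≤ K) :
    ∑ k ∈ Finset.range K,
        ts k * Real.sqrt (∑ τ ∈ Finset.range (k + 1),
          (1 - β τ) ^ 2 * ∏ κ ∈ Finset.Icc (τ + 1) k, (β κ) ^ 2)
      ≤ t * (7 / 2 + Real.sqrt (2 * Real.exp 1 ^ 2) * Real.log K) :=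
  stmt_4_general t ht β hβ ts hts K
end

section
/- Let t > 0 and for integers k ≥ 0 set β^k = 1 − (k+1)^{−1/2} and t^k = t (k+1)^{−3/4}. Then for every integer K ≥ 1, Σ_{k=0}^{K−1} t^k · Σ_{τ=1}^{k} t^τ ∏_{κ=τ}^{k} β^κ ≤ 7 t² (3 + log K). -/
open Finset Real

/-!
The left side is `t²` times its value at `t = 1`, so take `t = 1`. The inner sum
`a k = ∑_{τ=1}^{k} t^τ ∏_{κ=τ}^{k} β^κ` satisfies `a 0 = 0` and
`a (k+1) = β^{k+1} (a k + t^{k+1})`, and this recursion preserves the bound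
`a k ≤ 2 (k+1)^{-1/4}`. Hence the `k`-th outer term is at most `2 / (k+1)`, and the harmonic
sum is at most `1 + log K`.
-/

section WeightedTail

variable {R : Type*} [CommSemiring R] (β w : ℕ → R)

def weightedTail (k : ℕ) : R := ∑ τ ∈ Icc 1 k, w τ * ∏ κ ∈ Icc τ k, β κ

@[simp] lemma weightedTail_zero : weightedTail β w 0 = 0 := by
  simp [weightedTail]

lemma weightedTail_succ (k : ℕ) :
    weightedTail β w (k + 1) = β (k + 1) * (weightedTail β w k + w (k + 1)) := by
  have hprod : ∀ τ ∈ Icc 1 k,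
      w τ * ∏ κ ∈ Icc τ (k + 1), β κ = β (k + 1) * (w τ * ∏ κ ∈ Icc τ k, β κ) := by
    intro τ hτ
    rw [prod_Icc_succ_top (by grind)]
    ring
  rw [weightedTail, sum_Icc_succ_top (by omega), sum_congr rfl hprod, ← mul_sum, Icc_self,
    prod_singleton, weightedTail]
  ring

lemma weightedTail_const_mul (c : R) (k : ℕ) :
    weightedTail β (fun k ↦ c * w k) k = c * weightedTail β w k := by
  simp only [weightedTail, mul_sum, mul_assoc]

end WeightedTail

lemma one_sub_rpow_half_mul_le {x : ℝ} (hx : 0 < x) :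
    (1 - (x + 1) ^ (-(1 / 2 : ℝ))) * (2 * x ^ (-(1 / 4 : ℝ)) + (x + 1) ^ (-(3 / 4 : ℝ)))
      ≤ 2 * (x + 1) ^ (-(1 / 4 : ℝ)) := by
  set y := x + 1
  have hy : 0 < y := by positivity
  set s := y ^ (-(1 / 2 : ℝ))
  set q := y ^ (-(1 / 4 : ℝ))
  have hs : 0 < s := rpow_pos_of_pos hy _
  have hs1 : s < 1 := rpow_lt_one_of_one_lt_of_neg (by linarith) (by norm_num)
  have hq : 0 ≤ q := rpow_nonneg hy.le _
  have hssy : s * s * y = 1 := by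
    rw [← rpow_add hy, show -(1 / 2 : ℝ) + -(1 / 2) = -1 by norm_num, rpow_neg_one,
      inv_mul_cancel₀ hy.ne']
  have hy34 : y ^ (-(3 / 4 : ℝ)) = q * s := by
    rw [← rpow_add hy]; norm_num
  -- `(y / x) ^ (1 / 4) ≤ y / x` since `y / x ≥ 1`
  have hx14 : x ^ (-(1 / 4 : ℝ)) ≤ q * (y / x) := by
    have hxy : x ^ (-(1 / 4 : ℝ)) = q * (x / y) ^ (-(1 / 4 : ℝ)) := by
      rw [← mul_rpow hy.le (by positivity), mul_div_cancel₀ _ hy.ne']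
    have hle : (x / y) ^ (-(1 / 4 : ℝ)) ≤ (x / y) ^ (-1 : ℝ) :=
      rpow_le_rpow_of_exponent_ge (by positivity) (by rw [div_le_one hy]; linarith)
        (by norm_num)
    rw [rpow_neg_one, inv_div] at hle
    rw [hxy]
    exact mul_le_mul_of_nonneg_left hle hq
  -- after dividing by `1 - s`, and with `y = s⁻²`, this is `-s ≤ s⁻¹`
  have hpoly : (1 - s) * (2 * (y / x) + s) ≤ 2 := by
    rw [show (1 - s) * (2 * (y / x) + s) = (1 - s) * (2 * y + s * x) / x by field_simp,
      div_le_iff₀ hx]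
    nlinarith [mul_nonneg (sub_nonneg.2 hs1.le) (by positivity : (0 : ℝ) ≤ 1 + s ^ 2),
      mul_pos hs hy]
  calc (1 - s) * (2 * x ^ (-(1 / 4 : ℝ)) + y ^ (-(3 / 4 : ℝ)))
      ≤ (1 - s) * (2 * (q * (y / x)) + q * s) := by
        rw [hy34]; gcongr
    _ = q * ((1 - s) * (2 * (y / x) + s)) := by ring
    _ ≤ q * 2 := mul_le_mul_of_nonneg_left hpoly hq
    _ = 2 * q := mul_comm _ _

noncomputable def momentum (k : ℕ) : ℝ := 1 - ((k : ℝ) + 1) ^ (-(1 / 2 : ℝ))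

noncomputable def stepSize (k : ℕ) : ℝ := ((k : ℝ) + 1) ^ (-(3 / 4 : ℝ))

lemma weightedTail_momentum_le (k : ℕ) :
    weightedTail momentum stepSize k ≤ 2 * ((k : ℝ) + 1) ^ (-(1 / 4 : ℝ)) := by
  induction k with
  | zero => simp
  | succ n ih =>
    have hβ : 0 ≤ momentum (n + 1) :=
      sub_nonneg.2 (rpow_le_one_of_one_le_of_nonpos (by simp; positivity) (by norm_num))
    calc weightedTail momentum stepSize (n + 1)
        ≤ momentum (n + 1) * (2 * ((n : ℝ) + 1) ^ (-(1 / 4 : ℝ)) + stepSize (n + 1)) := by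
          rw [weightedTail_succ]
          gcongr
      _ ≤ _ := by
          simp only [momentum, stepSize]
          push_cast
          exact one_sub_rpow_half_mul_le (by positivity)

lemma stepSize_mul_weightedTail_le (k : ℕ) :
    stepSize k * weightedTail momentum stepSize k ≤ 2 * ((k : ℝ) + 1)⁻¹ := by
  have hk : (0 : ℝ) < k + 1 := by positivity
  calc stepSize k * weightedTail momentum stepSize k
      ≤ stepSize k * (2 * ((k : ℝ) + 1) ^ (-(1 / 4 : ℝ))) := by
        gcongr
        · exact rpow_nonneg hk.le _
        · exact weightedTail_momentum_le k
    _ = 2 * ((k : ℝ) + 1)⁻¹ := by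
        rw [stepSize, mul_left_comm, ← rpow_add hk, ← rpow_neg_one]
        norm_num

theorem stmt_5_general (t : ℝ)
    (β : ℕ → ℝ) (hβ : ∀ k, β k = 1 - ((k : ℝ) + 1) ^ (-(1 / 2 : ℝ)))
    (ts : ℕ → ℝ) (hts : ∀ k, ts k = t * ((k : ℝ) + 1) ^ (-(3 / 4 : ℝ)))
    (K : ℕ) :
    ∑ k ∈ Finset.range K,
        ts k * ∑ τ ∈ Finset.Icc 1 k, ts τ * ∏ κ ∈ Finset.Icc τ k, β κ
      ≤ 7 * t ^ 2 * (3 + Real.log K) := by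
  obtain rfl : β = momentum := funext hβ
  obtain rfl : ts = fun k ↦ t * stepSize k := funext hts
  calc ∑ k ∈ range K, t * stepSize k * weightedTail momentum (fun k ↦ t * stepSize k) k
      = t ^ 2 * ∑ k ∈ range K, stepSize k * weightedTail momentum stepSize k := by
        simp only [weightedTail_const_mul, mul_sum]
        exact sum_congr rfl fun k _ ↦ by ring
    _ ≤ t ^ 2 * ∑ k ∈ range K, 2 * ((k : ℝ) + 1)⁻¹ := by
        gcongr t ^ 2 * ?_
        exact sum_le_sum fun k _ ↦ stepSize_mul_weightedTail_le k
    _ = 2 * t ^ 2 * harmonic K := by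
        simp only [harmonic, Rat.cast_sum, mul_sum]
        push_cast
        exact sum_congr rfl fun k _ ↦ by ring
    _ ≤ 2 * t ^ 2 * (1 + log K) := by gcongr; exact harmonic_le_one_add_log K
    _ ≤ 7 * t ^ 2 * (3 + log K) := by nlinarith [log_natCast_nonneg K, sq_nonneg t]

/-- Technical Lemma (Hübler et al., part (ii)): with `βᵏ = 1 − (k+1)^{−1/2}` and
`tᵏ = t(k+1)^{−3/4}` for `t > 0`, for every `K ≥ 1`,
`Σ_{k=0}^{K−1} tᵏ Σ_{τ=1}^{k} t^τ ∏_{κ=τ}^{k} β^κ ≤ 7t²(3 + log K)`. -/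
theorem stmt_5 (t : ℝ) (ht : 0 < t)
    (β : ℕ → ℝ) (hβ : ∀ k, β k = 1 - ((k : ℝ) + 1) ^ (-(1 / 2 : ℝ)))
    (ts : ℕ → ℝ) (hts : ∀ k, ts k = t * ((k : ℝ) + 1) ^ (-(3 / 4 : ℝ)))
    (K : ℕ) (hK : 1 ≤ K) :
    ∑ k ∈ Finset.range K,
        ts k * ∑ τ ∈ Finset.Icc 1 k, ts τ * ∏ κ ∈ Finset.Icc τ k, β κ
      ≤ 7 * t ^ 2 * (3 + Real.log K) :=
  stmt_5_general t β hβ ts hts K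
end
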